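/- Let F be the category of finite sets and Σ ⊆ F the subcategory of bijections. For symmetric sequences X and Y in a cocomplete closed symmetric monoidal category V, the composition product (Y ∘ X)(I) = colim over bijections of (J ↦ Y(J) ⊗ ⊗_{j∈J} X(f^{-1}(j))), where the colimit is over maps f : I → J, defines a monoidal structure on symmetric sequences whose unit is the symmetric sequence J with J(I) = 1_V if |I| = 1 and the initial object otherwise. In particular, J ∘ X ≅ X ≅ X ∘ J for every symmetric sequence X. -/

import Mathlib

/-!
The colimit defining `(Y ∘ X)(I)` identifies two terms over `f : I → J` and `f' : I → J'` that
differ by a bijection `J ≃ J'`. For `Y = J` the target of `f` is a point, so a term is just an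
element of `X` on the single fibre `I`. For `X = J` every fibre of `f` is a singleton, so `f` is
a bijection and the term is identified with the element of `Y(I)` transported back along it.
-/

/-- A symmetric sequence in `Type`: a functor on the groupoid of (finite) sets and
bijections, given by its values together with a functorial action of bijections. -/
structure SymSeq where
  obj : Type → Type
  map : ∀ {I J : Type}, I ≃ J → obj I → obj J
  map_refl : ∀ {I : Type} (x : obj I), map (Equiv.refl I) x = x
  map_trans : ∀ {I J K : Type} (e : I ≃ J) (e' : J ≃ K) (x : obj I),
    map e' (map e x) = map (e.trans e') x

/-- The terms of the colimit defining the composition product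
`(Y ∘ X)(I) = colim_{f : I → J} Y(J) ⊗ ⊗_{j ∈ J} X(f⁻¹(j))`. -/
def CompBase (Y X : SymSeq) (I : Type) : Type 1 :=
  Σ (J : Type) (f : I → J), Y.obj J × ∀ j : J, X.obj {i // f i = j}

/-- The relation identifying terms of the colimit along bijections of the target `J`. -/
def SymSeqCompRel (Y X : SymSeq) (I : Type) : CompBase Y X I → CompBase Y X I → Prop :=
  fun a b => ∃ e : a.1 ≃ b.1,
    ∃ h : ∀ i, e (a.2.1 i) = b.2.1 i,
      b.2.2.1 = Y.map e a.2.2.1 ∧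
        ∀ j : b.1, b.2.2.2 j =
          X.map (Equiv.subtypeEquiv (Equiv.refl I) (fun i => by
            rw [Equiv.refl_apply, ← h i]; exact e.eq_symm_apply)) (a.2.2.2 (e.symm j))

/-- The composition product of symmetric sequences, `(Y ∘ X)(I)`. -/
def compProd (Y X : SymSeq) (I : Type) : Type 1 := Quot (SymSeqCompRel Y X I)

/-- The unit symmetric sequence `J`, concentrated in arity one (with value the monoidal
unit, i.e. a point, on one-element sets, and empty otherwise). -/
def unitSeq : SymSeq where
  obj I := PLift (∃ i : I, ∀ x, x = i)
  map e x := ⟨⟨e x.down.choose, fun y => by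
    rw [← e.apply_symm_apply y, x.down.choose_spec (e.symm y)]⟩⟩
  map_refl _ := Subsingleton.elim _ _
  map_trans _ _ _ := Subsingleton.elim _ _

namespace unitSeq

instance (J : Type) : Subsingleton (unitSeq.obj J) :=
  inferInstanceAs (Subsingleton (PLift _))

def mk {J : Type} (j : J) (h : ∀ x, x = j) : unitSeq.obj J := ⟨⟨j, h⟩⟩

noncomputable def point {J : Type} (u : unitSeq.obj J) : J := u.down.choose

theorem eq_point {J : Type} (u : unitSeq.obj J) (j : J) : j = point u :=
  u.down.choose_spec j

theorem bijective_of_fiber {I J : Type} {f : I → J} (u : ∀ j, unitSeq.obj {i // f i = j}) :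
    Function.Bijective f :=
  ⟨fun a b hab => congrArg Subtype.val
      ((eq_point (u (f b)) ⟨a, hab⟩).trans (eq_point _ ⟨b, rfl⟩).symm),
    fun j => ⟨(point (u j)).1, (point (u j)).2⟩⟩

end unitSeq

namespace SymSeq

variable (X : SymSeq)

theorem map_eq_self {I : Type} {e : I ≃ I} (he : ∀ i, e i = i) (x : X.obj I) :
    X.map e x = x := by
  rw [show e = Equiv.refl I from Equiv.ext he, X.map_refl]

theorem map_fiber_congr {I J B : Type} {f : I → J} (x : ∀ j, X.obj {i // f i = j})
    {j j' : J} (hj : j = j') (E : {i // f i = j} ≃ B) (E' : {i // f i = j'} ≃ B)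
    (hE : ∀ i (p : f i = j) (p' : f i = j'), E ⟨i, p⟩ = E' ⟨i, p'⟩) :
    X.map E (x j) = X.map E' (x j') := by
  subst hj
  rw [show E = E' from Equiv.ext fun a => hE a.1 a.2 a.2]

noncomputable def leftUnitorFun {I : Type} (a : CompBase unitSeq X I) : X.obj I :=
  X.map (Equiv.subtypeUnivEquiv fun i => unitSeq.eq_point a.2.2.1 (a.2.1 i))
    (a.2.2.2 (unitSeq.point a.2.2.1))

theorem leftUnitorFun_eq_of_rel {I : Type} {a b : CompBase unitSeq X I}
    (r : SymSeqCompRel unitSeq X I a b) : X.leftUnitorFun a = X.leftUnitorFun b := by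
  obtain ⟨Ja, fa, ua, xa⟩ := a
  obtain ⟨Jb, fb, ub, xb⟩ := b
  obtain ⟨e, _, -, hx⟩ := r
  dsimp only at hx
  simp only [leftUnitorFun]
  rw [hx, X.map_trans]
  exact X.map_fiber_congr xa (unitSeq.eq_point ua _).symm _ _ fun _ _ _ => rfl

noncomputable def leftUnitorInvFun {I : Type} (x : X.obj I) : CompBase unitSeq X I :=
  ⟨PUnit, fun _ => .unit, unitSeq.mk .unit fun _ => rfl,
    fun _ => X.map (Equiv.subtypeUnivEquiv fun _ => rfl).symm x⟩

noncomputable def leftUnitor (I : Type) : compProd unitSeq X I ≃ X.obj I where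
  toFun := Quot.lift X.leftUnitorFun fun _ _ => X.leftUnitorFun_eq_of_rel
  invFun x := Quot.mk _ (X.leftUnitorInvFun x)
  left_inv := by
    rintro ⟨Ja, fa, ua, xa⟩
    let e : Ja ≃ PUnit :=
      ⟨fun _ => .unit, fun _ => unitSeq.point ua, fun j => (unitSeq.eq_point ua j).symm,
        fun _ => rfl⟩
    refine (Quot.sound ⟨e, fun _ => rfl, Subsingleton.elim _ _, fun _ => ?_⟩).symm
    exact (X.map_trans _ _ _).trans (X.map_fiber_congr xa rfl _ _ fun _ _ _ => rfl)
  right_inv x := (X.map_trans _ _ x).trans (X.map_eq_self (fun _ => rfl) x)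

noncomputable def rightUnitorFun {I : Type} (a : CompBase X unitSeq I) : X.obj I :=
  X.map (Equiv.ofBijective a.2.1 (unitSeq.bijective_of_fiber a.2.2.2)).symm a.2.2.1

theorem rightUnitorFun_eq_of_rel {I : Type} {a b : CompBase X unitSeq I}
    (r : SymSeqCompRel X unitSeq I a b) : X.rightUnitorFun a = X.rightUnitorFun b := by
  obtain ⟨Ja, fa, xa, ua⟩ := a
  obtain ⟨Jb, fb, xb, ub⟩ := b
  obtain ⟨e, he, hx, -⟩ := r
  dsimp only at he hx
  simp only [rightUnitorFun]
  have hb : Equiv.ofBijective fb (unitSeq.bijective_of_fiber ub) =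
      (Equiv.ofBijective fa (unitSeq.bijective_of_fiber ua)).trans e :=
    Equiv.ext fun i => (he i).symm
  rw [hx, X.map_trans, hb]
  congr 1
  ext j
  simp

noncomputable def rightUnitorInvFun {I : Type} (x : X.obj I) : CompBase X unitSeq I :=
  ⟨I, id, x, fun i => unitSeq.mk ⟨i, rfl⟩ fun y => Subtype.ext y.2⟩

noncomputable def rightUnitor (I : Type) : compProd X unitSeq I ≃ X.obj I where
  toFun := Quot.lift X.rightUnitorFun fun _ _ => X.rightUnitorFun_eq_of_rel
  invFun x := Quot.mk _ (X.rightUnitorInvFun x)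
  left_inv := by
    rintro ⟨Ja, fa, xa, ua⟩
    let e := Equiv.ofBijective fa (unitSeq.bijective_of_fiber ua)
    exact (Quot.sound ⟨e.symm, e.symm_apply_apply, rfl, fun _ => Subsingleton.elim _ _⟩).symm
  right_inv x := X.map_eq_self (Equiv.ofBijective_symm_apply_apply _ _) x

end SymSeq

/-- the composition product of symmetric sequences is unital with unit the
symmetric sequence `J` concentrated in arity one: `J ∘ X ≅ X ≅ X ∘ J` for every
symmetric sequence `X`. -/
theorem stmt_8 (X : SymSeq) (I : Type) :
    Nonempty (compProd unitSeq X I ≃ X.obj I) ∧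
      Nonempty (compProd X unitSeq I ≃ X.obj I) :=
  ⟨⟨X.leftUnitor I⟩, ⟨X.rightUnitor I⟩⟩
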